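/- Let V : ℝⁿ × (0,∞) → ℝ be continuous and positive, let p > 1, and let u : ℝⁿ × [0,∞) → ℝ be continuous, C² in the space variable and C¹ in the time variable on ℝⁿ × (0,∞), bounded from below, satisfying u_t = Δu + |u|^p V on ℝⁿ × (0,∞) and u(·,0) = u₀ ≥ 0. Then u ≥ 0 everywhere on ℝⁿ × [0,∞). -/

import Mathlib

open MeasureTheory Real Set

/-!
Since `|u|^p V ≥ 0`, `u` is a supersolution of the heat equation: `Δu ≤ u_t`. For `ε > 0` the
function `w = u + ε (‖x‖² + (2n + 1) t)` then satisfies `w_t - Δw ≥ ε (2n + 1) - 2nε = ε > 0`, so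
`w` cannot attain a negative minimum over a cylinder `B_R × [0, t]` at a point with positive time
inside the open ball, where `w_t ≤ 0 ≤ Δw`. A negative minimum is excluded at time `0` by the
initial datum and on `‖x‖ = R` by the lower bound `A` of `u` as soon as `ε R² ≥ -A`. Hence
`w ≥ 0`, and `ε → 0` gives `u ≥ 0`.
-/

noncomputable def laplacian {n : ℕ} (f : EuclideanSpace ℝ (Fin n) → ℝ)
    (x : EuclideanSpace ℝ (Fin n)) : ℝ :=
  ∑ i, fderiv ℝ (fun y => fderiv ℝ f y (EuclideanSpace.single i 1)) x (EuclideanSpace.single i 1)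

open Filter Topology

theorem IsLocalMin.deriv_deriv_nonneg {f : ℝ → ℝ} {a : ℝ}
    (hf : ∀ᶠ x in 𝓝 a, DifferentiableAt ℝ f x) (h : IsLocalMin f a) :
    0 ≤ deriv (deriv f) a := by
  by_contra! hneg
  have hdecr : ∀ᶠ x in 𝓝[>] a, deriv f x < 0 := deriv_neg_right_of_sign_deriv <|
    nhdsWithin_le_nhds <| eventually_nhdsWithin_sign_eq_of_deriv_neg hneg h.deriv_eq_zero
  obtain ⟨c, hac : a < c, hc⟩ := mem_nhdsGT_iff_exists_Ioo_subset.mp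
    (hdecr.and (nhdsWithin_le_nhds (hf.and h)))
  obtain ⟨b, hab, hbc⟩ := exists_between hac
  have hdiff : ∀ x ∈ Icc a b, DifferentiableAt ℝ f x := by
    rintro x ⟨hax, hxb⟩
    rcases hax.eq_or_lt with rfl | hax
    · exact hf.self_of_nhds
    · exact (hc ⟨hax, hxb.trans_lt hbc⟩).2.1
  obtain ⟨ξ, hξ, hslope⟩ := exists_deriv_eq_slope f hab
    (fun x hx => (hdiff x hx).continuousAt.continuousWithinAt)
    (fun x hx => (hdiff x (Ioo_subset_Icc_self hx)).differentiableWithinAt)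
  have hslope_neg : (f b - f a) / (b - a) < 0 := hslope ▸ (hc ⟨hξ.1, hξ.2.trans hbc⟩).1
  have hmin : f a ≤ f b := (hc ⟨hab, hbc⟩).2.2
  exact hslope_neg.not_ge (div_nonneg (sub_nonneg.mpr hmin) (sub_nonneg.mpr hab.le))

theorem IsLocalMinOn.deriv_nonpos_of_Iic {f : ℝ → ℝ} {t : ℝ} (h : IsLocalMinOn f (Iic t) t)
    (hf : DifferentiableAt ℝ f t) : deriv f t ≤ 0 := by
  have hleft : -1 ∈ posTangentConeAt (Iic t) t :=
    mem_posTangentConeAt_of_segment_subset <| (convex_Iic t).segment_subset (mem_Iic.2 le_rfl)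
      (by simp)
  simpa using h.hasFDerivWithinAt_nonneg hf.hasDerivAt.hasFDerivAt.hasFDerivWithinAt hleft

section LineRestriction

variable {E : Type*} [NormedAddCommGroup E] [NormedSpace ℝ E]

theorem ContDiff.differentiable_fderiv_apply {f : E → ℝ} (hf : ContDiff ℝ 2 f) (v : E) :
    Differentiable ℝ fun y => fderiv ℝ f y v :=
  ((hf.fderiv_right (m := 1) le_rfl).differentiable one_ne_zero).clm_apply
    (differentiable_const v)

theorem deriv_deriv_comp_add_smul {f : E → ℝ} (hf : ContDiff ℝ 2 f) (x v : E) :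
    deriv (deriv fun s : ℝ => f (x + s • v)) 0 = fderiv ℝ (fun y => fderiv ℝ f y v) x v := by
  have hline : ∀ s : ℝ, HasDerivAt (fun s : ℝ => x + s • v) v s := fun s => by
    simpa using ((hasDerivAt_id s).smul_const v).const_add x
  have hfirst : deriv (fun s : ℝ => f (x + s • v)) = fun s => fderiv ℝ f (x + s • v) v := by
    funext s
    exact ((hf.differentiable two_ne_zero _).hasFDerivAt.comp_hasDerivAt s (hline s)).deriv
  rw [hfirst]
  simpa [Function.comp_def] using
    ((hf.differentiable_fderiv_apply v _).hasFDerivAt.comp_hasDerivAt 0 (hline 0)).deriv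

end LineRestriction

section Euclidean

variable {n : ℕ}

theorem laplacian_nonneg_of_isLocalMin {f : EuclideanSpace ℝ (Fin n) → ℝ}
    {x : EuclideanSpace ℝ (Fin n)} (hf : ContDiff ℝ 2 f) (h : IsLocalMin f x) :
    0 ≤ laplacian f x := by
  refine Finset.sum_nonneg fun i _ => ?_
  rw [← deriv_deriv_comp_add_smul hf]
  refine IsLocalMin.deriv_deriv_nonneg (.of_forall fun s => ?_) ?_
  · exact (hf.differentiable two_ne_zero _).comp s (by fun_prop)
  · exact IsLocalMin.comp_continuous (by simpa using h) (by fun_prop)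

theorem laplacian_add {f g : EuclideanSpace ℝ (Fin n) → ℝ} (hf : ContDiff ℝ 2 f)
    (hg : ContDiff ℝ 2 g) (x : EuclideanSpace ℝ (Fin n)) :
    laplacian (fun y => f y + g y) x = laplacian f x + laplacian g x := by
  simp only [laplacian, ← Finset.sum_add_distrib]
  refine Finset.sum_congr rfl fun i _ => ?_
  set v : EuclideanSpace ℝ (Fin n) := EuclideanSpace.single i 1
  have hgrad : (fun y => fderiv ℝ (fun z => f z + g z) y v)
      = fun y => fderiv ℝ f y v + fderiv ℝ g y v := by
    funext y
    rw [fderiv_fun_add (hf.differentiable two_ne_zero y) (hg.differentiable two_ne_zero y)]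
    rfl
  rw [hgrad, fderiv_fun_add (hf.differentiable_fderiv_apply v x)
    (hg.differentiable_fderiv_apply v x)]
  rfl

theorem laplacian_mul_norm_sq_add_const (a c : ℝ) (x : EuclideanSpace ℝ (Fin n)) :
    laplacian (fun y => a * (‖y‖ ^ 2 + c)) x = 2 * n * a := by
  have hgrad : ∀ v : EuclideanSpace ℝ (Fin n),
      (fun y => fderiv ℝ (fun y => a * (‖y‖ ^ 2 + c)) y v) = fun y => 2 * a * innerSL ℝ v y := by
    intro v
    funext y
    rw [(((hasStrictFDerivAt_norm_sq y).hasFDerivAt.add_const c).const_mul a).fderiv]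
    simp [real_inner_comm]
    ring
  have hsecond : ∀ v : EuclideanSpace ℝ (Fin n),
      fderiv ℝ (fun y => 2 * a * innerSL ℝ v y) x v = 2 * a * ‖v‖ ^ 2 := by
    intro v
    rw [((innerSL ℝ v).hasFDerivAt.const_mul (2 * a)).fderiv]
    simp
  simp only [laplacian, hgrad, hsecond]
  simp
  ring

theorem deriv_le_laplacian_of_isMinOn {w : EuclideanSpace ℝ (Fin n) → ℝ → ℝ}
    {U : Set (EuclideanSpace ℝ (Fin n))} {x : EuclideanSpace ℝ (Fin n)} {a t : ℝ}
    (hspace : ContDiff ℝ 2 fun y => w y t) (htime : DifferentiableAt ℝ (fun s => w x s) t)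
    (hU : U ∈ 𝓝 x) (hat : a < t) (hmin : IsMinOn (fun q => w q.1 q.2) (U ×ˢ Icc a t) (x, t)) :
    deriv (fun s => w x s) t ≤ laplacian (fun y => w y t) x := by
  have hspace_min : IsLocalMin (fun y => w y t) x :=
    IsMinOn.isLocalMin (s := U) (fun y hy => hmin (mk_mem_prod hy (right_mem_Icc.2 hat.le))) hU
  have htime_min : IsLocalMinOn (fun s => w x s) (Iic t) t :=
    Filter.mem_of_superset (Icc_mem_nhdsLE hat) fun s hs =>
      hmin (mk_mem_prod (mem_of_mem_nhds hU) hs)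
  exact (htime_min.deriv_nonpos_of_Iic htime).trans
    (laplacian_nonneg_of_isLocalMin hspace hspace_min)

section HeatSupersolution

variable {u : EuclideanSpace ℝ (Fin n) → ℝ → ℝ}
  (hu_cont : ContinuousOn (fun q : EuclideanSpace ℝ (Fin n) × ℝ => u q.1 q.2)
    {q : EuclideanSpace ℝ (Fin n) × ℝ | 0 ≤ q.2})
  (hu_space : ∀ t : ℝ, 0 < t → ContDiff ℝ 2 (fun x => u x t))
  (hu_time : ∀ x, ∀ t : ℝ, 0 < t → DifferentiableAt ℝ (fun s => u x s) t)
  (hsuper : ∀ x, ∀ t : ℝ, 0 < t → laplacian (fun y => u y t) x ≤ deriv (fun s => u x s) t)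
  (h0 : ∀ x, 0 ≤ u x 0)
include hu_cont hu_space hu_time hsuper h0

theorem add_penalty_nonneg_of_heat_supersolution {A : ℝ}
    (hA : ∀ x, ∀ t : ℝ, 0 ≤ t → A ≤ u x t) {ε : ℝ} (hε : 0 < ε) (x : EuclideanSpace ℝ (Fin n))
    {t : ℝ} (ht : 0 ≤ t) : 0 ≤ u x t + ε * (‖x‖ ^ 2 + (2 * n + 1) * t) := by
  obtain ⟨R, hxR, hAR⟩ := ((eventually_ge_atTop ‖x‖).and
    (((tendsto_pow_atTop two_ne_zero).const_mul_atTop hε).eventually_ge_atTop (-A))).exists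
  let w : EuclideanSpace ℝ (Fin n) → ℝ → ℝ :=
    fun y s => u y s + ε * (‖y‖ ^ 2 + (2 * n + 1) * s)
  have hwK : ContinuousOn (fun q => w q.1 q.2) (Metric.closedBall 0 R ×ˢ Icc 0 t) :=
    (hu_cont.mono fun q hq => hq.2.1).add (by fun_prop)
  obtain ⟨⟨x₁, t₁⟩, ⟨hx₁ : x₁ ∈ Metric.closedBall 0 R, ht₁ : t₁ ∈ Icc 0 t⟩, hmin⟩ :=
    ((isCompact_closedBall 0 R).prod isCompact_Icc).exists_isMinOn
      ⟨(x, t), mem_closedBall_zero_iff.2 hxR, ht, le_rfl⟩ hwK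
  have hle : w x₁ t₁ ≤ w x t := isMinOn_iff.1 hmin (x, t)
    ⟨mem_closedBall_zero_iff.2 hxR, ht, le_rfl⟩
  refine le_trans ?_ hle
  by_contra! hneg
  simp only [w] at hneg
  have ht₁_pos : 0 < t₁ := by
    refine ht₁.1.lt_of_ne fun h => ?_
    subst h
    nlinarith [h0 x₁, sq_nonneg ‖x₁‖]
  have hx₁_ball : x₁ ∈ Metric.ball 0 R := by
    refine mem_ball_zero_iff.2 ((mem_closedBall_zero_iff.1 hx₁).lt_of_ne fun h => ?_)
    rw [h] at hneg
    nlinarith [hA x₁ t₁ ht₁.1, mul_nonneg hε.le (by positivity : (0 : ℝ) ≤ (2 * n + 1) * t₁)]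
  have hw_time :
      HasDerivAt (fun s => w x₁ s) (deriv (fun s => u x₁ s) t₁ + ε * (2 * n + 1)) t₁ :=
    (hu_time x₁ t₁ ht₁_pos).hasDerivAt.add <| by
      simpa using
        (((hasDerivAt_id t₁).const_mul (2 * n + 1 : ℝ)).const_add (‖x₁‖ ^ 2)).const_mul ε
  have hmin_principle := deriv_le_laplacian_of_isMinOn (w := w)
    ((hu_space t₁ ht₁_pos).add (contDiff_const.mul ((contDiff_norm_sq ℝ).add contDiff_const)))
    hw_time.differentiableAt (Metric.closedBall_mem_nhds_of_mem hx₁_ball) ht₁_pos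
    (hmin.on_subset (prod_mono le_rfl (Icc_subset_Icc_right ht₁.2)))
  rw [hw_time.deriv, laplacian_add (hu_space t₁ ht₁_pos)
    (contDiff_const.mul ((contDiff_norm_sq ℝ).add contDiff_const)),
    laplacian_mul_norm_sq_add_const] at hmin_principle
  linarith [hsuper x₁ t₁ ht₁_pos]

theorem nonneg_of_heat_supersolution (hbelow : ∃ A : ℝ, ∀ x, ∀ t : ℝ, 0 ≤ t → A ≤ u x t) :
    ∀ x, ∀ t : ℝ, 0 ≤ t → 0 ≤ u x t := by
  obtain ⟨A, hA⟩ := hbelow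
  intro x t ht
  have hlim : Tendsto (fun ε => u x t + ε * (‖x‖ ^ 2 + (2 * n + 1) * t)) (𝓝[>] 0) (𝓝 (u x t)) :=
    ((continuous_const.add (continuous_id.mul continuous_const)).tendsto' _ _
      (by simp)).mono_left nhdsWithin_le_nhds
  exact ge_of_tendsto hlim <| eventually_nhdsWithin_of_forall fun ε hε =>
    add_penalty_nonneg_of_heat_supersolution hu_cont hu_space hu_time hsuper h0 hA hε x ht

end HeatSupersolution

end Euclidean

theorem nonneg_of_solution_weighted_superlinear_heat_general
    {n : ℕ} (p : ℝ)
    (u V : EuclideanSpace ℝ (Fin n) → ℝ → ℝ)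
    -- u is continuous up to t = 0
    (hu_cont : ContinuousOn (fun q : EuclideanSpace ℝ (Fin n) × ℝ => u q.1 q.2)
      {q : EuclideanSpace ℝ (Fin n) × ℝ | 0 ≤ q.2})
    -- u is C² in the space variable for every t > 0
    (hu_space : ∀ t : ℝ, 0 < t → ContDiff ℝ 2 (fun x => u x t))
    -- u is C¹ in the time variable on (0,∞)
    (hu_time : ∀ x, ContDiffOn ℝ 1 (fun s => u x s) (Ioi 0))
    -- V is positive
    (hV_pos : ∀ x, ∀ t : ℝ, 0 < t → 0 < V x t)
    -- u is bounded from below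
    (hbelow : ∃ A : ℝ, ∀ x, ∀ t : ℝ, 0 ≤ t → A ≤ u x t)
    -- u solves u_t = Δu + |u|^p V on ℝⁿ × (0,∞)
    (hpde : ∀ x, ∀ t : ℝ, 0 < t →
      deriv (fun s => u x s) t = laplacian (fun y => u y t) x + |u x t| ^ p * V x t)
    -- nonnegative initial datum
    (h0 : ∀ x, 0 ≤ u x 0) :
    ∀ x, ∀ t : ℝ, 0 ≤ t → 0 ≤ u x t := by
  have hu_diff : ∀ x, ∀ t : ℝ, 0 < t → DifferentiableAt ℝ (fun s => u x s) t := fun x t ht =>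
    ((hu_time x).contDiffAt (Ioi_mem_nhds ht)).differentiableAt one_ne_zero
  have hsuper : ∀ x, ∀ t : ℝ, 0 < t →
      laplacian (fun y => u y t) x ≤ deriv (fun s => u x s) t := fun x t ht => by
    rw [hpde x t ht]
    exact le_add_of_nonneg_right
      (mul_nonneg (rpow_nonneg (abs_nonneg _) p) (hV_pos x t ht).le)
  exact nonneg_of_heat_supersolution hu_cont hu_space hu_diff hsuper h0 hbelow

/-- A bounded-below classical solution of the weighted superlinear heat equation
`u_t = Δu + |u|^p V` on `ℝⁿ × (0,∞)` with positive continuous weight `V` and nonnegative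
initial datum is nonnegative everywhere on `ℝⁿ × [0,∞)`. -/
theorem nonneg_of_solution_weighted_superlinear_heat
    {n : ℕ} (p : ℝ) (hp : 1 < p)
    (u V : EuclideanSpace ℝ (Fin n) → ℝ → ℝ)
    -- u is continuous up to t = 0
    (hu_cont : ContinuousOn (fun q : EuclideanSpace ℝ (Fin n) × ℝ => u q.1 q.2)
      {q : EuclideanSpace ℝ (Fin n) × ℝ | 0 ≤ q.2})
    -- u is C² in the space variable for every t > 0
    (hu_space : ∀ t : ℝ, 0 < t → ContDiff ℝ 2 (fun x => u x t))
    -- u is C¹ in the time variable on (0,∞)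
    (hu_time : ∀ x, ContDiffOn ℝ 1 (fun s => u x s) (Ioi 0))
    -- V is continuous on ℝⁿ × (0,∞)
    (hV_cont : ContinuousOn (fun q : EuclideanSpace ℝ (Fin n) × ℝ => V q.1 q.2)
      {q : EuclideanSpace ℝ (Fin n) × ℝ | 0 < q.2})
    -- V is positive
    (hV_pos : ∀ x, ∀ t : ℝ, 0 < t → 0 < V x t)
    -- u is bounded from below
    (hbelow : ∃ A : ℝ, ∀ x, ∀ t : ℝ, 0 ≤ t → A ≤ u x t)
    -- u solves u_t = Δu + |u|^p V on ℝⁿ × (0,∞)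
    (hpde : ∀ x, ∀ t : ℝ, 0 < t →
      deriv (fun s => u x s) t = laplacian (fun y => u y t) x + |u x t| ^ p * V x t)
    -- nonnegative initial datum
    (h0 : ∀ x, 0 ≤ u x 0) :
    ∀ x, ∀ t : ℝ, 0 ≤ t → 0 ≤ u x t :=
  nonneg_of_solution_weighted_superlinear_heat_general p u V hu_cont hu_space hu_time hV_pos hbelow
    hpde h0
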